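/- arXiv:math/0510107 — 2 statements merged into one kernel-verified Lean document; each statement's English description precedes it below -/
import Mathlib

section
/- Under the hypotheses of the fractional Gronwall lemma, sup_{n≥0} sup_{0≤t≤T} f_n(t) < ∞; moreover if α = 0 then the series Σ_{n≥0} f_n(t) converges uniformly on [0,T]. -/
open MeasureTheory intervalIntegral Filter

/-- integrability of `exp (c*u) * u^r` on `0..b` for `r > -1`. -/
lemma fg_aux_int1 (c r b : ℝ) (hr : -1 < r) :
    IntervalIntegrable (fun u => Real.exp (c * u) * u ^ r) volume 0 b :=
  (intervalIntegral.intervalIntegrable_rpow' hr).continuousOn_mul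
    (Real.continuous_exp.comp (continuous_const.mul continuous_id)).continuousOn

/-- integrability of `exp (c*s) * (t-s)^r` on `0..t`. -/
lemma fg_aux_int2 (c r t : ℝ) (hr : -1 < r) :
    IntervalIntegrable (fun s => Real.exp (c * s) * (t - s) ^ r) volume 0 t := by
  have h := (fg_aux_int1 (-c) r t hr).comp_sub_left t
  simp only [sub_zero, sub_self] at h
  have h2 := h.symm.const_mul (Real.exp (c * t))
  have heq : (fun x => Real.exp (c * t) * (Real.exp (-c * (t - x)) * (t - x) ^ r))
      = fun s => Real.exp (c * s) * (t - s) ^ r := by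
    funext x
    rw [← mul_assoc, ← Real.exp_add, show c * t + -c * (t - x) = c * x by ring]
  rw [heq] at h2
  exact h2

/-- The crucial smallness bound on the kernel integral against an exponential. -/
lemma fg_key (θ T ε : ℝ) (hθ : 0 < θ) (hT : 0 < T) (hε : 0 < ε) :
    ∃ lam : ℝ, 0 ≤ lam ∧ ∀ t ∈ Set.Icc (0:ℝ) T,
      (∫ s in (0:ℝ)..t, Real.exp (lam * s) * (t - s) ^ (θ - 1))
        ≤ ε * Real.exp (lam * t) := by
  have hr : (-1:ℝ) < θ - 1 := by linarith
  set δ : ℝ := (ε * θ / 2) ^ θ⁻¹ with hδdef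
  have hδpos : 0 < δ := Real.rpow_pos_of_pos (by positivity) _
  have hδθ : δ ^ θ = ε * θ / 2 := Real.rpow_inv_rpow (by positivity) hθ.ne'
  have hTθ : 0 < T ^ θ := Real.rpow_pos_of_pos hT _
  set A : ℝ := 2 * T ^ θ / (ε * θ) with hAdef
  have hA : 0 < A := by positivity
  set lam : ℝ := max 0 (Real.log A / δ) with hlamdef
  have hlam0 : 0 ≤ lam := le_max_left _ _
  have hlamδ : Real.log A ≤ lam * δ := by
    have h1 : Real.log A / δ ≤ lam := le_max_right _ _
    calc Real.log A = (Real.log A / δ) * δ := by field_simp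
      _ ≤ lam * δ := by nlinarith
  have hexpδ : Real.exp (-(lam * δ)) * T ^ θ / θ ≤ ε / 2 := by
    have h1 : Real.exp (-(lam * δ)) ≤ Real.exp (-(Real.log A)) :=
      Real.exp_le_exp.2 (by linarith)
    have h2 : Real.exp (-(Real.log A)) = A⁻¹ := by
      rw [Real.exp_neg, Real.exp_log hA]
    have h3 : A⁻¹ * T ^ θ / θ = ε / 2 := by
      rw [hAdef]; field_simp
    rw [← h3, ← h2]
    gcongr
  refine ⟨lam, hlam0, ?_⟩
  intro t ht
  obtain ⟨ht0, htT⟩ := ht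
  set g : ℝ → ℝ := fun u => Real.exp (-lam * u) * u ^ (θ - 1) with hgdef
  have hint0 : ∀ b : ℝ, IntervalIntegrable g volume 0 b := fun b =>
    fg_aux_int1 (-lam) (θ - 1) b hr
  -- rewrite the integral via u = t - s
  have hrw : (∫ s in (0:ℝ)..t, Real.exp (lam * s) * (t - s) ^ (θ - 1))
      = Real.exp (lam * t) * ∫ u in (0:ℝ)..t, g u := by
    have h1 : (∫ s in (0:ℝ)..t, Real.exp (lam * s) * (t - s) ^ (θ - 1))
        = ∫ s in (0:ℝ)..t, Real.exp (lam * t) * g (t - s) := by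
      apply intervalIntegral.integral_congr
      intro s _
      simp only [hgdef]
      rw [← mul_assoc, ← Real.exp_add]
      ring_nf
    rw [h1, intervalIntegral.integral_const_mul]
    congr 1
    have h2 := intervalIntegral.integral_comp_sub_left g t (a := 0) (b := t)
    simpa using h2
  rw [hrw]
  -- compute integrals of u ^ (θ-1)
  have hrpowval : ∀ a b : ℝ, (∫ u in a..b, u ^ (θ - 1)) = (b ^ θ - a ^ θ) / θ := by
    intro a b
    rw [integral_rpow (Or.inl hr)]
    have : θ - 1 + 1 = θ := by ring
    rw [this]
  -- pointwise bounds
  have hg_le : ∀ u : ℝ, 0 ≤ u → g u ≤ u ^ (θ - 1) := by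
    intro u hu
    have h1 : Real.exp (-lam * u) ≤ 1 := Real.exp_le_one_iff.2 (by nlinarith)
    have h2 : (0:ℝ) ≤ u ^ (θ - 1) := Real.rpow_nonneg hu _
    simpa [hgdef] using mul_le_of_le_one_left h2 h1
  -- bound the transformed integral by ε
  have hJ : (∫ u in (0:ℝ)..t, g u) ≤ ε := by
    by_cases hcase : t ≤ δ
    · have hmono : (∫ u in (0:ℝ)..t, g u) ≤ ∫ u in (0:ℝ)..t, u ^ (θ - 1) := by
        apply integral_mono_on ht0 (hint0 t)
          (intervalIntegral.intervalIntegrable_rpow' hr)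
        intro u hu
        exact hg_le u hu.1
      have h1 : t ^ θ ≤ δ ^ θ := Real.rpow_le_rpow ht0 hcase hθ.le
      have h0 : (0:ℝ) ^ θ = 0 := Real.zero_rpow hθ.ne'
      rw [hrpowval 0 t, h0] at hmono
      have : (t ^ θ - 0) / θ ≤ ε / 2 := by
        rw [sub_zero, div_le_iff₀ hθ]
        nlinarith
      linarith
    · push_neg at hcase
      have hintδt : IntervalIntegrable g volume δ t :=
        (hint0 (max δ t)).mono_set (Set.uIcc_subset_uIcc
          (Set.mem_uIcc.2 (Or.inl ⟨hδpos.le, le_max_left _ _⟩))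
          (Set.mem_uIcc.2 (Or.inl ⟨ht0, le_max_right _ _⟩)))
      have hsplit : (∫ u in (0:ℝ)..δ, g u) + (∫ u in δ..t, g u) = ∫ u in (0:ℝ)..t, g u :=
        intervalIntegral.integral_add_adjacent_intervals (hint0 δ) hintδt
      have hb1 : (∫ u in (0:ℝ)..δ, g u) ≤ ε / 2 := by
        have hmono : (∫ u in (0:ℝ)..δ, g u) ≤ ∫ u in (0:ℝ)..δ, u ^ (θ - 1) := by
          apply integral_mono_on hδpos.le (hint0 δ)
            (intervalIntegral.intervalIntegrable_rpow' hr)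
          intro u hu
          exact hg_le u hu.1
        rw [hrpowval 0 δ, Real.zero_rpow hθ.ne', hδθ] at hmono
        calc (∫ u in (0:ℝ)..δ, g u) ≤ (ε * θ / 2 - 0) / θ := hmono
          _ = ε / 2 := by field_simp; ring
      have hb2 : (∫ u in δ..t, g u) ≤ ε / 2 := by
        have hmono : (∫ u in δ..t, g u)
            ≤ ∫ u in δ..t, Real.exp (-(lam * δ)) * u ^ (θ - 1) := by
          apply integral_mono_on hcase.le hintδt
            ((intervalIntegral.intervalIntegrable_rpow' hr).const_mul _)
          intro u hu
          have h1 : Real.exp (-lam * u) ≤ Real.exp (-(lam * δ)) :=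
            Real.exp_le_exp.2 (by nlinarith [hu.1])
          have h2 : (0:ℝ) ≤ u ^ (θ - 1) := Real.rpow_nonneg (by linarith [hu.1]) _
          exact mul_le_mul_of_nonneg_right h1 h2
        rw [intervalIntegral.integral_const_mul, hrpowval δ t] at hmono
        have h3 : t ^ θ ≤ T ^ θ := Real.rpow_le_rpow ht0 htT hθ.le
        have h4 : (0:ℝ) ≤ δ ^ θ := by rw [hδθ]; positivity
        have h5 : Real.exp (-(lam * δ)) * ((t ^ θ - δ ^ θ) / θ)
            ≤ Real.exp (-(lam * δ)) * T ^ θ / θ := by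
          rw [mul_div_assoc]
          gcongr
          linarith
        linarith
      linarith
  calc Real.exp (lam * t) * ∫ u in (0:ℝ)..t, g u
      ≤ Real.exp (lam * t) * ε := mul_le_mul_of_nonneg_left hJ (Real.exp_nonneg _)
    _ = ε * Real.exp (lam * t) := by ring

/-- monotonicity of the kernel integral under a pointwise exponential bound. -/
lemma fg_mono (θ lam c t : ℝ) (hθ : 0 < θ) (hc : 0 ≤ c) (ht0 : 0 ≤ t)
    (g : ℝ → ℝ) (hg0 : ∀ s ∈ Set.Icc (0:ℝ) t, 0 ≤ g s)
    (hgb : ∀ s ∈ Set.Icc (0:ℝ) t, g s ≤ c * Real.exp (lam * s)) :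
    (∫ s in (0:ℝ)..t, g s * (t - s) ^ (θ - 1))
      ≤ c * ∫ s in (0:ℝ)..t, Real.exp (lam * s) * (t - s) ^ (θ - 1) := by
  have hr : (-1:ℝ) < θ - 1 := by linarith
  have hint : IntervalIntegrable
      (fun s => c * (Real.exp (lam * s) * (t - s) ^ (θ - 1))) volume 0 t :=
    (fg_aux_int2 lam (θ - 1) t hr).const_mul c
  rw [← intervalIntegral.integral_const_mul]
  by_cases h : IntervalIntegrable (fun s => g s * (t - s) ^ (θ - 1)) volume 0 t
  · apply integral_mono_on ht0 h hint
    intro s hs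
    have h1 : (0:ℝ) ≤ (t - s) ^ (θ - 1) := Real.rpow_nonneg (by linarith [hs.2]) _
    calc g s * (t - s) ^ (θ - 1)
        ≤ (c * Real.exp (lam * s)) * (t - s) ^ (θ - 1) :=
          mul_le_mul_of_nonneg_right (hgb s hs) h1
      _ = c * (Real.exp (lam * s) * (t - s) ^ (θ - 1)) := by ring
  · rw [intervalIntegral.integral_undef h]
    apply intervalIntegral.integral_nonneg ht0
    intro s hs
    have h1 : (0:ℝ) ≤ (t - s) ^ (θ - 1) := Real.rpow_nonneg (by linarith [hs.2]) _
    exact mul_nonneg hc (mul_nonneg (Real.exp_nonneg _) h1)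

theorem fractional_gronwall_consequences
    (θ α β T M : ℝ) (hθ : 0 < θ) (hα : 0 ≤ α) (hβ : 0 ≤ β) (hT : 0 < T)
    (f : ℕ → ℝ → ℝ)
    (hpos : ∀ n, ∀ t ∈ Set.Icc (0:ℝ) T, 0 ≤ f n t)
    (hM : ∀ t ∈ Set.Icc (0:ℝ) T, f 0 t ≤ M)
    (hrec : ∀ n ≥ 1, ∀ t ∈ Set.Icc (0:ℝ) T,
      f n t ≤ α + β * ∫ s in (0:ℝ)..t, f (n-1) s * (t - s) ^ (θ - 1)) :
    (∃ C : ℝ, ∀ n, ∀ t ∈ Set.Icc (0:ℝ) T, f n t ≤ C) ∧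
    (α = 0 → TendstoUniformlyOn
      (fun (N : ℕ) (t : ℝ) => ∑ n ∈ Finset.range N, f n t)
      (fun t => ∑' n, f n t) atTop (Set.Icc (0:ℝ) T)) := by
  set ε : ℝ := (2 * (β + 1))⁻¹ with hεdef
  have hε : 0 < ε := by positivity
  have hβε : β * ε ≤ 1 / 2 := by
    have h1 : ε * (2 * (β + 1)) = 1 := inv_mul_cancel₀ (by positivity)
    nlinarith
  obtain ⟨lam, hlam0, hkey⟩ := fg_key θ T ε hθ hT hε
  have hM0 : 0 ≤ M :=
    le_trans (hpos 0 0 ⟨le_refl _, hT.le⟩) (hM 0 ⟨le_refl _, hT.le⟩)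
  have hsub : ∀ t : ℝ, t ∈ Set.Icc (0:ℝ) T → ∀ s ∈ Set.Icc (0:ℝ) t,
      s ∈ Set.Icc (0:ℝ) T := fun t ht s hs => ⟨hs.1, le_trans hs.2 ht.2⟩
  have hexp1 : ∀ t : ℝ, 0 ≤ t → (1:ℝ) ≤ Real.exp (lam * t) := fun t ht =>
    Real.one_le_exp (by nlinarith)
  -- the general induction step
  have hstep : ∀ (c : ℝ), 0 ≤ c → ∀ n : ℕ,
      (∀ s ∈ Set.Icc (0:ℝ) T, f n s ≤ c * Real.exp (lam * s)) →
      ∀ t ∈ Set.Icc (0:ℝ) T,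
        f (n + 1) t ≤ α + β * (c * (ε * Real.exp (lam * t))) := by
    intro c hc n hb t ht
    have h1 := hrec (n + 1) (by omega) t ht
    simp only [Nat.add_sub_cancel] at h1
    have h2 : (∫ s in (0:ℝ)..t, f n s * (t - s) ^ (θ - 1))
        ≤ c * ∫ s in (0:ℝ)..t, Real.exp (lam * s) * (t - s) ^ (θ - 1) :=
      fg_mono θ lam c t hθ hc ht.1 (f n)
        (fun s hs => hpos n s (hsub t ht s hs))
        (fun s hs => hb s (hsub t ht s hs))
    have h3 : c * (∫ s in (0:ℝ)..t, Real.exp (lam * s) * (t - s) ^ (θ - 1))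
        ≤ c * (ε * Real.exp (lam * t)) :=
      mul_le_mul_of_nonneg_left (hkey t ht) hc
    nlinarith [le_trans h2 h3]
  constructor
  · -- boundedness
    have main : ∀ n : ℕ, ∀ t ∈ Set.Icc (0:ℝ) T,
        f n t ≤ (M + 2 * α) * Real.exp (lam * t) := by
      intro n
      induction n with
      | zero =>
        intro t ht
        have hE := hexp1 t ht.1
        nlinarith [hM t ht]
      | succ n ih =>
        intro t ht
        have h1 := hstep (M + 2 * α) (by linarith) n ih t ht
        have hE := hexp1 t ht.1
        have hC : (0:ℝ) ≤ M + 2 * α := by linarith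
        have hCE : (0:ℝ) ≤ (M + 2 * α) * Real.exp (lam * t) :=
          mul_nonneg hC (Real.exp_nonneg _)
        have k1 : β * ((M + 2 * α) * (ε * Real.exp (lam * t)))
            = (β * ε) * ((M + 2 * α) * Real.exp (lam * t)) := by ring
        have k2 : (β * ε) * ((M + 2 * α) * Real.exp (lam * t))
            ≤ (1 / 2) * ((M + 2 * α) * Real.exp (lam * t)) :=
          mul_le_mul_of_nonneg_right hβε hCE
        have k3 : (M + 2 * α) * 1 ≤ (M + 2 * α) * Real.exp (lam * t) :=
          mul_le_mul_of_nonneg_left hE hC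
        linarith
    refine ⟨(M + 2 * α) * Real.exp (lam * T), fun n t ht => ?_⟩
    have h1 := main n t ht
    have h2 : Real.exp (lam * t) ≤ Real.exp (lam * T) :=
      Real.exp_le_exp.2 (by nlinarith [ht.2])
    nlinarith
  · -- uniform convergence when α = 0
    intro hα0
    subst hα0
    have main : ∀ n : ℕ, ∀ t ∈ Set.Icc (0:ℝ) T,
        f n t ≤ (M * (1 / 2) ^ n) * Real.exp (lam * t) := by
      intro n
      induction n with
      | zero =>
        intro t ht
        have hE := hexp1 t ht.1
        simp only [pow_zero, mul_one]
        nlinarith [hM t ht]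
      | succ n ih =>
        intro t ht
        have h1 := hstep (M * (1 / 2) ^ n) (by positivity) n ih t ht
        have hp : (0:ℝ) ≤ M * (1 / 2) ^ n := by positivity
        have hE : (0:ℝ) ≤ Real.exp (lam * t) := Real.exp_nonneg _
        have : β * (M * (1 / 2) ^ n * (ε * Real.exp (lam * t)))
            ≤ (M * (1 / 2) ^ (n + 1)) * Real.exp (lam * t) := by
          have h2 : β * ε * (M * (1 / 2) ^ n * Real.exp (lam * t))
              ≤ (1 / 2) * (M * (1 / 2) ^ n * Real.exp (lam * t)) :=
            mul_le_mul_of_nonneg_right hβε (by positivity)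
          calc β * (M * (1 / 2) ^ n * (ε * Real.exp (lam * t)))
              = β * ε * (M * (1 / 2) ^ n * Real.exp (lam * t)) := by ring
            _ ≤ (1 / 2) * (M * (1 / 2) ^ n * Real.exp (lam * t)) := h2
            _ = (M * (1 / 2) ^ (n + 1)) * Real.exp (lam * t) := by ring
        linarith
    apply tendstoUniformlyOn_tsum_nat
      (u := fun n => (M * Real.exp (lam * T)) * (1 / 2) ^ n)
    · exact summable_geometric_two.mul_left _
    · intro n t ht
      rw [Real.norm_of_nonneg (hpos n t ht)]
      have h1 := main n t ht
      have h2 : Real.exp (lam * t) ≤ Real.exp (lam * T) :=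
        Real.exp_le_exp.2 (by nlinarith [ht.2])
      have hp : (0:ℝ) ≤ M * (1 / 2) ^ n := by positivity
      calc f n t ≤ (M * (1 / 2) ^ n) * Real.exp (lam * t) := h1
        _ ≤ (M * (1 / 2) ^ n) * Real.exp (lam * T) := by gcongr
        _ = (M * Real.exp (lam * T)) * (1 / 2) ^ n := by ring
end

section
/- Let λ ∈ (1,2] and 0 < α < (λ-1)/(2λ). There exists a constant C (depending on λ and α) such that for all t > 0 and h ∈ (0,1], ∫₀ᵗ ∫_{|y|>1} e^{-2(t-s)|y|^λ}(e^{-h|y|^λ} - 1)² dy ds ≤ C h^{2α}. -/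
open MeasureTheory intervalIntegral Set

lemma hf_sq_le_rpow {b : ℝ} (hb : 0 < b) (hb1 : b ≤ 1) {x : ℝ} (hx : 0 ≤ x) :
    (Real.exp (-x) - 1) ^ 2 ≤ x ^ b := by
  have h1 : Real.exp (-x) ≤ 1 := Real.exp_le_one_iff.mpr (neg_nonpos.mpr hx)
  have h0 : 0 ≤ 1 - Real.exp (-x) := by linarith
  have hle : 1 - Real.exp (-x) ≤ x := by
    have := Real.add_one_le_exp (-x)
    linarith
  have hsq : (Real.exp (-x) - 1) ^ 2 ≤ 1 - Real.exp (-x) := by nlinarith [Real.exp_pos (-x)]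
  rcases le_or_gt x 1 with hx1 | hx1
  · rcases eq_or_lt_of_le hx with h0' | h0'
    · have : x = 0 := h0'.symm
      subst this
      simp only [neg_zero, Real.exp_zero, sub_self, Real.zero_rpow hb.ne']
      norm_num
    · have hxb : x ≤ x ^ b := by
        calc x = x ^ (1:ℝ) := (Real.rpow_one x).symm
        _ ≤ x ^ b := Real.rpow_le_rpow_of_exponent_ge h0' hx1 hb1
      linarith
  · have : (1:ℝ) ≤ x ^ b := by
      calc (1:ℝ) = 1 ^ b := (Real.one_rpow b).symm
      _ ≤ x ^ b := Real.rpow_le_rpow zero_le_one hx1.le hb.le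
    nlinarith

theorem high_frequency_time_estimate (l α : ℝ) (hl : l ∈ Set.Ioc (1:ℝ) 2)
    (hα : 0 < α) (hα' : α < (l - 1) / (2 * l)) :
    ∃ C : ℝ, ∀ t : ℝ, 0 < t → ∀ h : ℝ, 0 < h → h ≤ 1 →
      (∫ s in (0:ℝ)..t, ∫ y in {y : ℝ | 1 < |y|},
          Real.exp (-2 * (t - s) * |y| ^ l) * (Real.exp (-h * |y| ^ l) - 1) ^ 2)
        ≤ C * h ^ (2 * α) := by
  obtain ⟨hl1, hl2⟩ := hl
  have hl0 : (0:ℝ) < l := lt_trans one_pos hl1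
  set S : Set ℝ := {y : ℝ | 1 < |y|} with hSdef
  have hSm : MeasurableSet S := measurableSet_lt measurable_const measurable_abs
  set p : ℝ := l * (2 * α) - l with hpdef
  have h2l : (0:ℝ) < 2 * l := by linarith
  have ha2 : α * (2 * l) < l - 1 := (lt_div_iff₀ h2l).mp hα'
  have hp : p < -1 := by rw [hpdef]; nlinarith
  have h2α1 : 2 * α ≤ 1 := by nlinarith
  -- integrability of |y|^p on S
  have hintIoi : IntegrableOn (fun y : ℝ => |y| ^ p) (Ioi (1:ℝ)) := by
    refine (integrableOn_Ioi_rpow_of_lt hp one_pos).congr_fun ?_ measurableSet_Ioi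
    intro y hy
    simp [abs_of_pos (lt_trans one_pos (mem_Ioi.mp hy))]
  have hintIio : IntegrableOn (fun y : ℝ => |y| ^ p) (Iio (-1:ℝ)) := by
    have m : MeasurableEmbedding fun x : ℝ => -x :=
      (Homeomorph.neg ℝ).measurableEmbedding
    rw [show (volume : Measure ℝ) = Measure.map (fun x : ℝ => -x) volume from
      (Measure.map_neg_eq_self (volume : Measure ℝ)).symm]
    rw [m.integrableOn_map_iff]
    have hpre : (fun x : ℝ => -x) ⁻¹' Iio (-1) = Ioi (1:ℝ) := by
      ext x
      simp only [Set.mem_preimage, Set.mem_Iio, Set.mem_Ioi]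
      constructor <;> intro hx <;> linarith
    rw [hpre]
    simpa [Function.comp_def, abs_neg] using hintIoi
  have hSeq : S = Iio (-1) ∪ Ioi 1 := by
    ext y
    simp only [hSdef, Set.mem_setOf_eq, Set.mem_union, Set.mem_Iio, Set.mem_Ioi, lt_abs]
    constructor
    · rintro (h | h)
      · exact Or.inr h
      · exact Or.inl (by linarith)
    · rintro (h | h)
      · exact Or.inr (by linarith)
      · exact Or.inl h
  have hint : IntegrableOn (fun y : ℝ => |y| ^ p) S := by
    rw [hSeq]; exact hintIio.union hintIoi
  have hnn : 0 ≤ ∫ y in S, |y| ^ p / 2 :=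
    integral_nonneg fun y => by positivity
  refine ⟨∫ y in S, |y| ^ p / 2, ?_⟩
  intro t ht h hh hh1
  have hhα : (0:ℝ) ≤ h ^ (2 * α) := Real.rpow_nonneg hh.le _
  -- pointwise bound
  have hFnn : ∀ s y : ℝ,
      0 ≤ Real.exp (-2 * (t - s) * |y| ^ l) * (Real.exp (-h * |y| ^ l) - 1) ^ 2 :=
    fun s y => mul_nonneg (Real.exp_nonneg _) (sq_nonneg _)
  have hFG : ∀ s y : ℝ,
      Real.exp (-2 * (t - s) * |y| ^ l) * (Real.exp (-h * |y| ^ l) - 1) ^ 2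
        ≤ Real.exp (-2 * (t - s) * |y| ^ l) * (h ^ (2 * α) * |y| ^ (l * (2 * α))) := by
    intro s y
    refine mul_le_mul_of_nonneg_left ?_ (Real.exp_nonneg _)
    have hx : 0 ≤ h * |y| ^ l := mul_nonneg hh.le (Real.rpow_nonneg (abs_nonneg y) l)
    have e1 : -h * |y| ^ l = -(h * |y| ^ l) := by ring
    rw [e1]
    calc (Real.exp (-(h * |y| ^ l)) - 1) ^ 2 ≤ (h * |y| ^ l) ^ (2 * α) :=
          hf_sq_le_rpow (by linarith) h2α1 hx
    _ = h ^ (2 * α) * (|y| ^ l) ^ (2 * α) :=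
          Real.mul_rpow hh.le (Real.rpow_nonneg (abs_nonneg y) _)
    _ = h ^ (2 * α) * |y| ^ (l * (2 * α)) := by
          rw [← Real.rpow_mul (abs_nonneg y)]
  -- s-integral bound for y ∈ S
  have hsl : ∀ y ∈ S,
      (∫⁻ s in Ioc (0:ℝ) t, ENNReal.ofReal (Real.exp (-2 * (t - s) * |y| ^ l)))
        ≤ ENNReal.ofReal ((2 * |y| ^ l)⁻¹) := by
    intro y hy
    have hy1 : (1:ℝ) < |y| := hy
    have hc : 0 < |y| ^ l := Real.rpow_pos_of_pos (lt_trans one_pos hy1) l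
    set cy := |y| ^ l with hcy
    have hcont : Continuous fun s : ℝ => Real.exp (-2 * (t - s) * cy) := by fun_prop
    have hInt : IntegrableOn (fun s : ℝ => Real.exp (-2 * (t - s) * cy)) (Ioc 0 t) :=
      hcont.integrableOn_Ioc
    rw [← ofReal_integral_eq_lintegral_ofReal hInt
      (Filter.Eventually.of_forall fun s => Real.exp_nonneg _)]
    apply ENNReal.ofReal_le_ofReal
    rw [← intervalIntegral.integral_of_le ht.le]
    have hderiv : ∀ s ∈ Set.uIcc (0:ℝ) t,
        HasDerivAt (fun s => Real.exp (-2 * (t - s) * cy) / (2 * cy))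
          (Real.exp (-2 * (t - s) * cy)) s := by
      intro s _
      have h1 : HasDerivAt (fun s : ℝ => -2 * (t - s) * cy) (2 * cy) s := by
        have h2 : HasDerivAt (fun s : ℝ => 2 * cy * s + -2 * t * cy) (2 * cy) s := by
          simpa using ((hasDerivAt_id s).const_mul (2 * cy)).add_const (-2 * t * cy)
        have e : (fun s : ℝ => -2 * (t - s) * cy) = fun s : ℝ => 2 * cy * s + -2 * t * cy := by
          funext u; ring
        rw [e]; exact h2
      have h3 := (h1.exp).div_const (2 * cy)
      rw [mul_div_assoc, div_self (show (2 * cy) ≠ 0 by positivity), mul_one] at h3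
      exact h3
    rw [intervalIntegral.integral_eq_sub_of_hasDerivAt hderiv (hcont.intervalIntegrable 0 t)]
    have e1 : -2 * (t - t) * cy = 0 := by ring
    have e2 : 0 ≤ Real.exp (-2 * (t - 0) * cy) / (2 * cy) := by positivity
    rw [e1, Real.exp_zero]
    have e3 : (1:ℝ) / (2 * cy) = (2 * cy)⁻¹ := one_div _
    linarith
  -- main chain
  rw [intervalIntegral.integral_of_le ht.le]
  set I : ℝ → ℝ := fun s => ∫ y in S,
    Real.exp (-2 * (t - s) * |y| ^ l) * (Real.exp (-h * |y| ^ l) - 1) ^ 2 with hIdef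
  have hInn_nn : ∀ s, 0 ≤ I s := fun s => integral_nonneg fun y => hFnn s y
  have key : (∫⁻ s in Ioc (0:ℝ) t, ENNReal.ofReal (I s))
      ≤ ENNReal.ofReal ((∫ y in S, |y| ^ p / 2) * h ^ (2 * α)) := by
    have mG : Measurable fun z : ℝ × ℝ =>
        ENNReal.ofReal (Real.exp (-2 * (t - z.1) * |z.2| ^ l)
          * (h ^ (2 * α) * |z.2| ^ (l * (2 * α)))) := by fun_prop
    calc (∫⁻ s in Ioc (0:ℝ) t, ENNReal.ofReal (I s))
        ≤ ∫⁻ s in Ioc (0:ℝ) t, ∫⁻ y in S, ENNReal.ofReal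
            (Real.exp (-2 * (t - s) * |y| ^ l) * (Real.exp (-h * |y| ^ l) - 1) ^ 2) := by
          refine lintegral_mono fun s => ?_
          rw [← Real.enorm_eq_ofReal (hInn_nn s)]
          calc ‖I s‖ₑ ≤ ∫⁻ y in S, ‖Real.exp (-2 * (t - s) * |y| ^ l)
                * (Real.exp (-h * |y| ^ l) - 1) ^ 2‖ₑ :=
              enorm_integral_le_lintegral_enorm _
          _ = _ := lintegral_congr fun y => Real.enorm_eq_ofReal (hFnn s y)
      _ ≤ ∫⁻ s in Ioc (0:ℝ) t, ∫⁻ y in S, ENNReal.ofReal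
            (Real.exp (-2 * (t - s) * |y| ^ l) * (h ^ (2 * α) * |y| ^ (l * (2 * α)))) :=
          lintegral_mono fun s => lintegral_mono fun y => ENNReal.ofReal_le_ofReal (hFG s y)
      _ = ∫⁻ y in S, ∫⁻ s in Ioc (0:ℝ) t, ENNReal.ofReal
            (Real.exp (-2 * (t - s) * |y| ^ l) * (h ^ (2 * α) * |y| ^ (l * (2 * α)))) :=
          lintegral_lintegral_swap mG.aemeasurable
      _ = ∫⁻ y in S, ENNReal.ofReal (h ^ (2 * α) * |y| ^ (l * (2 * α)))
            * ∫⁻ s in Ioc (0:ℝ) t, ENNReal.ofReal (Real.exp (-2 * (t - s) * |y| ^ l)) := by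
          refine lintegral_congr fun y => ?_
          rw [← lintegral_const_mul' _ _ ENNReal.ofReal_ne_top]
          refine lintegral_congr fun s => ?_
          rw [← ENNReal.ofReal_mul (by positivity)]
          congr 1
          ring
      _ ≤ ∫⁻ y in S, ENNReal.ofReal (h ^ (2 * α) * |y| ^ (l * (2 * α)))
            * ENNReal.ofReal ((2 * |y| ^ l)⁻¹) :=
          setLIntegral_mono' hSm fun y hy => mul_le_mul_right (hsl y hy) _
      _ = ∫⁻ y in S, ENNReal.ofReal (|y| ^ p / 2 * h ^ (2 * α)) := by
          refine setLIntegral_congr_fun hSm (fun y hy => ?_)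
          have hy1 : (1:ℝ) < |y| := hy
          have hy0 : (0:ℝ) < |y| := lt_trans one_pos hy1
          have hc : (0:ℝ) < |y| ^ l := Real.rpow_pos_of_pos hy0 l
          rw [← ENNReal.ofReal_mul (by positivity)]
          congr 1
          have e : |y| ^ p = |y| ^ (l * (2 * α)) / |y| ^ l := by
            rw [hpdef, Real.rpow_sub hy0]
          rw [e]
          field_simp
      _ = ENNReal.ofReal (∫ y in S, |y| ^ p / 2 * h ^ (2 * α)) := by
          rw [← ofReal_integral_eq_lintegral_ofReal
            (((hint.div_const 2).mul_const _))
            (Filter.Eventually.of_forall fun y => by positivity)]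
      _ = ENNReal.ofReal ((∫ y in S, |y| ^ p / 2) * h ^ (2 * α)) := by
          rw [MeasureTheory.integral_mul_const]
  by_cases hI : IntegrableOn I (Ioc 0 t)
  · rw [integral_eq_lintegral_of_nonneg_ae (Filter.Eventually.of_forall hInn_nn)
      hI.aestronglyMeasurable]
    have hmono := ENNReal.toReal_mono ENNReal.ofReal_ne_top key
    rwa [ENNReal.toReal_ofReal (mul_nonneg hnn hhα)] at hmono
  · rw [integral_undef hI]
    exact mul_nonneg hnn hhα
end
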